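/- arXiv:1007.2775 — 3 statements merged into one kernel-verified Lean document; each statement's English description precedes it below -/
import Mathlib

section
/- Let S ⊂ ℝ^d be a finite set with S = −S, 0 ∉ S, S spanning ℝ^d, and S convexly independent. Then there exists a norm on ℝ^d whose unit ball is strictly convex such that every point of S has norm exactly 1 (i.e., there is a centrally symmetric strictly convex unit sphere passing through all points of S). -/
open Pointwise Filter

noncomputable section

/-- A set in `ℝ^d` is convexly independent if no point of it lies in the
convex hull of the other points. -/
def ConvInd {d : ℕ} (S : Set (Fin d → ℝ)) : Prop :=
  ∀ p ∈ S, p ∉ convexHull ℝ (S \ {p})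

/-- `Efun d n` : the maximum, over `n`-point sets `P ⊂ ℝ^d`, of the number of
unordered pairs of distinct points of `P` whose midpoints are pairwise distinct
and form a convexly independent set.  Unordered pairs are encoded as ordered
pairs with the reversed pair excluded. -/
def Efun (d n : ℕ) : ℕ :=
  sSup {k | ∃ (P : Finset (Fin d → ℝ)) (T : Finset ((Fin d → ℝ) × (Fin d → ℝ))),
    P.card = n ∧
    (∀ e ∈ T, e.1 ∈ P ∧ e.2 ∈ P ∧ e.1 ≠ e.2 ∧ (e.2, e.1) ∉ T) ∧
    Set.InjOn (fun e : (Fin d → ℝ) × (Fin d → ℝ) => midpoint ℝ e.1 e.2) ↑T ∧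
    ConvInd ((fun e : (Fin d → ℝ) × (Fin d → ℝ) => midpoint ℝ e.1 e.2) '' ↑T) ∧
    T.card = k}

/-- `Mfun d m n` : the maximum, over `m`-point sets `P` and `n`-point sets `Q` in `ℝ^d`,
of the size of a convexly independent subset of the Minkowski sum `P + Q`. -/
def Mfun (d m n : ℕ) : ℕ :=
  sSup {k | ∃ P Q S : Finset (Fin d → ℝ),
    P.card = m ∧ Q.card = n ∧
    (S : Set (Fin d → ℝ)) ⊆ (P : Set (Fin d → ℝ)) + (Q : Set (Fin d → ℝ)) ∧
    ConvInd (S : Set (Fin d → ℝ)) ∧ S.card = k}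

/-- A norm on `ℝ^d` whose unit ball is strictly convex (the unit sphere contains
no nondegenerate segment, expressed via midpoints of distinct unit vectors). -/
structure StrictNorm (d : ℕ) where
  toFun : (Fin d → ℝ) → ℝ
  eq_zero_iff : ∀ x, toFun x = 0 ↔ x = 0
  smul_eq : ∀ (a : ℝ) (x : Fin d → ℝ), toFun (a • x) = |a| * toFun x
  add_le : ∀ x y, toFun (x + y) ≤ toFun x + toFun y
  strictly_convex : ∀ x y, toFun x = 1 → toFun y = 1 → x ≠ y →
    toFun ((1 / 2 : ℝ) • (x + y)) < 1

/-- A (not necessarily strictly convex) norm on `ℝ^d`. -/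
structure NormOn (d : ℕ) where
  toFun : (Fin d → ℝ) → ℝ
  eq_zero_iff : ∀ x, toFun x = 0 ↔ x = 0
  smul_eq : ∀ (a : ℝ) (x : Fin d → ℝ), toFun (a • x) = |a| * toFun x
  add_le : ∀ x y, toFun (x + y) ≤ toFun x + toFun y

/-- `Wfun d n` : the maximum, over `n`-point sets `S ⊂ ℝ^d` and strictly convex
norms on `ℝ^d`, of the number of pairwise nonparallel unit-distance pairs in `S`.
(The nonparallelity condition between distinct ordered pairs automatically rules
out listing any unordered pair twice.) -/
def Wfun (d n : ℕ) : ℕ :=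
  sSup {k | ∃ (S : Finset (Fin d → ℝ)) (ν : StrictNorm d)
      (T : Finset ((Fin d → ℝ) × (Fin d → ℝ))),
    S.card = n ∧
    (∀ e ∈ T, e.1 ∈ S ∧ e.2 ∈ S ∧ ν.toFun (e.1 - e.2) = 1) ∧
    (∀ e ∈ T, ∀ f ∈ T, e ≠ f → ∀ c : ℝ, e.1 - e.2 ≠ c • (f.1 - f.2)) ∧
    T.card = k}

/-- `Ufun d n` : the maximum, over `n`-point sets `S ⊂ ℝ^d` and strictly convex
norms on `ℝ^d`, of the number of unordered unit-distance pairs in `S`. -/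
def Ufun (d n : ℕ) : ℕ :=
  sSup {k | ∃ (S : Finset (Fin d → ℝ)) (ν : StrictNorm d)
      (T : Finset ((Fin d → ℝ) × (Fin d → ℝ))),
    S.card = n ∧
    (∀ e ∈ T, e.1 ∈ S ∧ e.2 ∈ S ∧ e.1 ≠ e.2 ∧ ν.toFun (e.1 - e.2) = 1 ∧ (e.2, e.1) ∉ T) ∧
    T.card = k}

/-- `Dfun d n` : the maximum, over `n`-point sets `S ⊂ ℝ^d` and strictly convex
norms on `ℝ^d`, of the number of unordered diameter pairs in `S` (pairs of points
whose distance equals the diameter `D` of `S` in the norm). -/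
def Dfun (d n : ℕ) : ℕ :=
  sSup {k | ∃ (S : Finset (Fin d → ℝ)) (ν : StrictNorm d)
      (T : Finset ((Fin d → ℝ) × (Fin d → ℝ))) (D : ℝ),
    S.card = n ∧
    (∀ p ∈ S, ∀ q ∈ S, ν.toFun (p - q) ≤ D) ∧
    (∃ p ∈ S, ∃ q ∈ S, ν.toFun (p - q) = D) ∧
    (∀ e ∈ T, e.1 ∈ S ∧ e.2 ∈ S ∧ e.1 ≠ e.2 ∧ ν.toFun (e.1 - e.2) = D ∧ (e.2, e.1) ∉ T) ∧
    T.card = k}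

/-- A family of sets in `ℝ^d` is strictly antipodal if for each pair of points
`p ∈ A i`, `q ∈ A j` with `i ≠ j` there is a linear functional `φ` with
`φ p < φ r < φ q` for every other point `r` of the union. -/
def StrictlyAntipodal {d : ℕ} {ι : Type*} (A : ι → Set (Fin d → ℝ)) : Prop :=
  ∀ i j, i ≠ j → ∀ p ∈ A i, ∀ q ∈ A j, ∃ φ : (Fin d → ℝ) →ₗ[ℝ] ℝ,
    ∀ r ∈ ⋃ t, A t, r ≠ p → r ≠ q → φ p < φ r ∧ φ r < φ q

/-- `aconst d` = `a(d)` : the largest `k` such that for every `m` there is a strictly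
antipodal family of `k` sets in `ℝ^d`, each of size at least `m`. -/
def aconst (d : ℕ) : ℕ :=
  sSup {k | ∀ m : ℕ, ∃ A : Fin k → Finset (Fin d → ℝ),
    (∀ i, m ≤ (A i).card) ∧ StrictlyAntipodal (fun i => ((A i : Set (Fin d → ℝ))))}

/-- The set of midpoints between points in different members of a family of finite sets. -/
def midSet {d : ℕ} {ι : Type*} (B : ι → Finset (Fin d → ℝ)) : Set (Fin d → ℝ) :=
  {x | ∃ i j, i ≠ j ∧ ∃ p ∈ B i, ∃ q ∈ B j, x = midpoint ℝ p q}

/-- The set of differences between points in different members of a family of sets. -/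
def diffSet {d : ℕ} {ι : Type*} (A : ι → Set (Fin d → ℝ)) : Set (Fin d → ℝ) :=
  {x | ∃ i j, i ≠ j ∧ ∃ p ∈ A i, ∃ q ∈ A j, x = p - q}


/-! Convex independence makes every `p ∈ S` an exposed point of `S`: some `u` has
`⟪u, q⟫ < ⟪u, p⟫` for the other `q ∈ S`, and `0 < ⟪u, p⟫` by symmetry. The ball of radius `R‖u‖`
centred at `p - R • u` has `p` on its boundary and, as `R → ∞`, fills out the half-space
`⟪u, ·⟫ < ⟪u, p⟫`, so for large `R` it contains the origin and the rest of `S` in its interior.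
Intersecting these balls, their reflections and one large ball about the origin gives a bounded,
symmetric, strictly convex neighbourhood of the origin with `S` on its boundary; its gauge is the
required norm. -/

open Metric Set Topology
open scoped RealInnerProductSpace

theorem Set.Finite.strictConvex_biInter {𝕜 ι E : Type*} [Semiring 𝕜] [PartialOrder 𝕜]
    [AddCommMonoid E] [TopologicalSpace E] [SMul 𝕜 E] {s : Set ι} (hs : s.Finite)
    {t : ι → Set E} (ht : ∀ i ∈ s, StrictConvex 𝕜 (t i)) : StrictConvex 𝕜 (⋂ i ∈ s, t i) := by
  intro x hx y hy hxy a b ha hb hab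
  rw [hs.interior_biInter]
  exact mem_iInter₂.2 fun i hi ↦
    ht i hi (mem_iInter₂.1 hx i hi) (mem_iInter₂.1 hy i hi) hxy ha hb hab

theorem ContinuousLinearEquiv.image_exposedPoints_subset {𝕜 E F : Type*} [TopologicalSpace 𝕜]
    [Ring 𝕜] [PartialOrder 𝕜] [AddCommMonoid E] [TopologicalSpace E] [Module 𝕜 E]
    [AddCommMonoid F] [TopologicalSpace F] [Module 𝕜 F] (L : F ≃L[𝕜] E) (A : Set F) :
    L '' A.exposedPoints 𝕜 ⊆ (L '' A).exposedPoints 𝕜 := by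
  rintro _ ⟨x, ⟨hxA, l, hl⟩, rfl⟩
  refine ⟨mem_image_of_mem L hxA, l.comp (L.symm : E →L[𝕜] F), ?_⟩
  rintro _ ⟨y, hy, rfl⟩
  simpa using hl y hy

theorem Set.Finite.subset_exposedPoints {E : Type*} [NormedAddCommGroup E] [NormedSpace ℝ E]
    {s : Set E} (hs : s.Finite) (hconv : ∀ p ∈ s, p ∉ convexHull ℝ (s \ {p})) :
    s ⊆ s.exposedPoints ℝ := by
  intro p hp
  obtain ⟨l, t, hlt, htp⟩ := geometric_hahn_banach_closed_point (convex_convexHull ℝ _)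
    (hs.sdiff.isClosed_convexHull ℝ) (hconv p hp)
  have hlt_p : ∀ q ∈ s, q ≠ p → l q < l p := fun q hq hqp ↦
    (hlt q (subset_convexHull ℝ _ ⟨hq, hqp⟩)).trans htp
  refine ⟨hp, l, fun q hq ↦ ?_⟩
  rcases eq_or_ne q p with rfl | hqp
  · simp
  · exact ⟨(hlt_p q hq hqp).le, fun h ↦ absurd h (hlt_p q hq hqp).not_ge⟩

section Gauge

variable {E : Type*} {K : Set E} {x y : E}

theorem StrictConvex.gauge_smul_add_smul_lt_one [AddCommGroup E] [Module ℝ E] [TopologicalSpace E]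
    [IsTopologicalAddGroup E] [ContinuousSMul ℝ E] (hK : StrictConvex ℝ K) (hKc : IsClosed K)
    (hK0 : K ∈ 𝓝 0) (hx : gauge K x = 1) (hy : gauge K y = 1) (hxy : x ≠ y) {a b : ℝ}
    (ha : 0 < a) (hb : 0 < b) (hab : a + b = 1) : gauge K (a • x + b • y) < 1 := by
  have hmem : ∀ {z}, gauge K z = 1 → z ∈ K := fun hz ↦
    hKc.closure_subset ((gauge_le_one_iff_mem_closure hK.convex hK0).1 hz.le)
  exact (gauge_lt_one_iff_mem_interior hK.convex hK0).2 (hK (hmem hx) (hmem hy) hxy ha hb hab)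

theorem gauge_eq_one_of_mem_sphere [NormedAddCommGroup E] [NormedSpace ℝ E] (hK : Convex ℝ K)
    (hK0 : K ∈ 𝓝 0) (hx : x ∈ K) {c : E} {r : ℝ} (hr : r ≠ 0) (hKr : K ⊆ closedBall c r)
    (hxr : x ∈ sphere c r) : gauge K x = 1 := by
  refine le_antisymm (gauge_le_one_of_mem hx) (not_lt.1 fun hlt ↦ ?_)
  have : x ∈ ball c r := by
    rw [← interior_closedBall c hr]
    exact interior_mono hKr ((gauge_lt_one_iff_mem_interior hK hK0).1 hlt)
  exact (mem_ball.1 this).ne (mem_sphere.1 hxr)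

end Gauge

def StrictNorm.ofGauge {d : ℕ} {E : Type*} [NormedAddCommGroup E] [NormedSpace ℝ E]
    (L : (Fin d → ℝ) →ₗ[ℝ] E) (hL : Function.Injective L) {K : Set E} (hK : StrictConvex ℝ K)
    (hKc : IsClosed K) (hKb : Bornology.IsBounded K) (hK0 : K ∈ 𝓝 0) (hKn : -K = K) :
    StrictNorm d where
  toFun x := gauge K (L x)
  eq_zero_iff x := by
    rw [gauge_eq_zero (absorbent_nhds_zero hK0) ((NormedSpace.isVonNBounded_iff ℝ).2 hKb),
      map_eq_zero_iff L hL]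
  smul_eq a x := by
    have hbal : Balanced ℝ K := (balanced_iff_neg_mem hK.convex).2 fun y hy ↦ by
      rwa [← hKn, Set.neg_mem_neg]
    rw [map_smul, gauge_smul hbal, Real.norm_eq_abs]
  add_le x y := by
    rw [map_add]
    exact gauge_add_le hK.convex (absorbent_nhds_zero hK0) _ _
  strictly_convex x y hx hy hxy := by
    rw [map_smul, map_add, smul_add]
    exact hK.gauge_smul_add_smul_lt_one hKc hK0 hx hy (hL.ne hxy) (by norm_num) (by norm_num)
      (by norm_num)

theorem exists_strictConvex_gauge_eq_one_of_balls {E : Type*} [NormedAddCommGroup E]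
    [NormedSpace ℝ E] [StrictConvexSpace ℝ E] {S : Set E} (hS : S.Finite)
    (hsymm : ∀ p ∈ S, -p ∈ S) {c : E → E} {r : E → ℝ} (h0 : ∀ p ∈ S, (0 : E) ∈ ball (c p) (r p))
    (hSc : ∀ p ∈ S, S ⊆ closedBall (c p) (r p)) (hsph : ∀ p ∈ S, p ∈ sphere (c p) (r p)) :
    ∃ K : Set E, StrictConvex ℝ K ∧ IsClosed K ∧ Bornology.IsBounded K ∧ K ∈ 𝓝 0 ∧
      -K = K ∧ ∀ p ∈ S, gauge K p = 1 := by
  obtain ⟨R, hR0, hSR⟩ := hS.isBounded.subset_closedBall_lt 0 0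
  set B : Set E := closedBall 0 R ∩ ⋂ p ∈ S, closedBall (c p) (r p)
  have hSB : S ⊆ B := subset_inter hSR (subset_iInter₂ hSc)
  have hB0 : B ∈ 𝓝 0 := inter_mem (closedBall_mem_nhds 0 hR0)
    ((biInter_mem hS).2 fun p hp ↦ closedBall_mem_nhds_of_mem (h0 p hp))
  have hBs : StrictConvex ℝ B := (strictConvex_closedBall ℝ 0 R).inter
    (hS.strictConvex_biInter fun p _ ↦ strictConvex_closedBall ℝ (c p) (r p))
  have hBc : IsClosed B := isClosed_closedBall.inter
    (isClosed_biInter fun p _ ↦ isClosed_closedBall)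
  have hK0 : B ∩ -B ∈ 𝓝 0 := inter_mem hB0 (neg_mem_nhds_zero E hB0)
  refine ⟨B ∩ -B, hBs.inter hBs.neg, hBc.inter hBc.neg,
    isBounded_closedBall.subset (inter_subset_left.trans inter_subset_left), hK0,
    by rw [inter_neg, neg_neg, inter_comm], fun p hp ↦ ?_⟩
  exact gauge_eq_one_of_mem_sphere (hBs.inter hBs.neg).convex hK0
    ⟨hSB hp, hSB (hsymm p hp)⟩ (pos_of_mem_ball (h0 p hp)).ne'
    (inter_subset_left.trans (inter_subset_right.trans (biInter_subset_of_mem hp))) (hsph p hp)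

section InnerProductSpace

variable {E : Type*} [NormedAddCommGroup E] [InnerProductSpace ℝ E]

theorem eventually_mem_ball_sub_smul {u p q : E} (h : ⟪u, q⟫ < ⟪u, p⟫) :
    ∀ᶠ R in atTop, q ∈ ball (p - R • u) (R * ‖u‖) := by
  have hδ : 0 < ⟪u, p - q⟫ := by rw [inner_sub_right]; linarith
  filter_upwards [eventually_gt_atTop 0,
    eventually_gt_atTop (‖q - p‖ ^ 2 / (2 * ⟪u, p - q⟫))] with R hR0 hR
  rw [div_lt_iff₀ (by positivity)] at hR
  have hsq : ‖q - (p - R • u)‖ ^ 2 = ‖q - p‖ ^ 2 - 2 * R * ⟪u, p - q⟫ + (R * ‖u‖) ^ 2 := by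
    rw [show q - (p - R • u) = (q - p) + R • u by abel, norm_add_sq_real, norm_smul,
      real_inner_smul_right, real_inner_comm, ← neg_sub p q, inner_neg_right,
      Real.norm_eq_abs, abs_of_pos hR0]
    ring
  rw [mem_ball, dist_eq_norm]
  exact lt_of_pow_lt_pow_left₀ 2 (by positivity) (by nlinarith)

theorem Set.Finite.exists_ball_of_inner_lt {A : Set E} (hA : A.Finite) {u p : E}
    (h : ∀ q ∈ A, q ≠ p → ⟪u, q⟫ < ⟪u, p⟫) :
    ∃ c r, p ∈ sphere c r ∧ ∀ q ∈ A, q ≠ p → q ∈ ball c r := by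
  obtain ⟨R, hR0, hR⟩ := ((eventually_ge_atTop 0).and <|
    hA.eventually_all.2 fun q hq ↦ eventually_imp_distrib_left.2 fun hqp ↦
      eventually_mem_ball_sub_smul (h q hq hqp)).exists
  exact ⟨p - R • u, R * ‖u‖, by simp [norm_smul, abs_of_nonneg hR0], hR⟩

variable [CompleteSpace E]

theorem exists_inner_lt_of_mem_exposedPoints {A : Set E} {p : E} (hp : p ∈ A.exposedPoints ℝ) :
    ∃ u : E, ∀ q ∈ A, q ≠ p → ⟪u, q⟫ < ⟪u, p⟫ := by
  obtain ⟨-, l, hl⟩ := hp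
  refine ⟨(InnerProductSpace.toDual ℝ E).symm l, fun q hq hqp ↦ ?_⟩
  simp only [InnerProductSpace.toDual_symm_apply]
  exact lt_of_not_ge fun h ↦ hqp ((hl q hq).2 h)

theorem exists_strictConvex_gauge_eq_one {S : Set E} (hS : S.Finite)
    (hexp : S ⊆ S.exposedPoints ℝ) (hsymm : ∀ p ∈ S, -p ∈ S) (h0 : (0 : E) ∉ S) :
    ∃ K : Set E, StrictConvex ℝ K ∧ IsClosed K ∧ Bornology.IsBounded K ∧ K ∈ 𝓝 0 ∧
      -K = K ∧ ∀ p ∈ S, gauge K p = 1 := by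
  have hball : ∀ p ∈ S, ∃ c r, p ∈ sphere c r ∧ ∀ q ∈ insert 0 S, q ≠ p → q ∈ ball c r := by
    intro p hp
    obtain ⟨u, hu⟩ := exists_inner_lt_of_mem_exposedPoints (hexp hp)
    have hneg : -p ≠ p := fun h ↦ h0 <| by
      rw [neg_eq_iff_add_eq_zero, ← two_smul ℝ, smul_eq_zero] at h
      exact h.resolve_left two_ne_zero ▸ hp
    have hpos : 0 < ⟪u, p⟫ := by
      have := hu (-p) (hsymm p hp) hneg
      rw [inner_neg_right] at this
      linarith
    refine (hS.insert 0).exists_ball_of_inner_lt (u := u) fun q hq hqp ↦ ?_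
    rcases hq with rfl | hq
    · simpa using hpos
    · exact hu q hq hqp
  choose! c r hsph hball using hball
  refine exists_strictConvex_gauge_eq_one_of_balls hS hsymm
    (fun p hp ↦ hball p hp 0 (mem_insert 0 S) (ne_of_mem_of_not_mem hp h0).symm)
    (fun p hp q hq ↦ ?_) hsph
  rcases eq_or_ne q p with rfl | hqp
  · exact sphere_subset_closedBall (hsph q hp)
  · exact ball_subset_closedBall (hball p hp q (mem_insert_of_mem 0 hq) hqp)

end InnerProductSpace

theorem exists_strict_norm_through_general (d : ℕ) (S : Finset (Fin d → ℝ))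
    (hsymm : ∀ p ∈ S, -p ∈ S) (h0 : (0 : Fin d → ℝ) ∉ S)
    (hconv : ConvInd (S : Set (Fin d → ℝ))) :
    ∃ ν : StrictNorm d, ∀ p ∈ S, ν.toFun p = 1 := by
  let L := (EuclideanSpace.equiv (Fin d) ℝ).symm
  have hexp : L '' S ⊆ (L '' S).exposedPoints ℝ :=
    (image_mono (S.finite_toSet.subset_exposedPoints hconv)).trans
      (L.image_exposedPoints_subset _)
  obtain ⟨K, hK, hKc, hKb, hK0, hKn, hKS⟩ := exists_strictConvex_gauge_eq_one
    (S.finite_toSet.image L) hexp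
    (by rintro _ ⟨p, hp, rfl⟩; exact ⟨-p, hsymm p hp, map_neg L p⟩)
    (by rintro ⟨p, hp, hp0⟩; exact h0 (L.map_eq_zero_iff.1 hp0 ▸ hp))
  exact ⟨.ofGauge (L : (Fin d → ℝ) →ₗ[ℝ] _) L.injective hK hKc hKb hK0 hKn,
    fun p hp ↦ hKS _ (mem_image_of_mem L hp)⟩

/-- If `S ⊂ ℝ^d` is finite, symmetric (`S = -S`), avoids the origin, spans `ℝ^d` and is
convexly independent, then there is a strictly convex norm on `ℝ^d` whose unit sphere
passes through every point of `S`. -/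
theorem exists_strict_norm_through (d : ℕ) (S : Finset (Fin d → ℝ))
    (hsymm : ∀ p ∈ S, -p ∈ S) (h0 : (0 : Fin d → ℝ) ∉ S)
    (hspan : Submodule.span ℝ (S : Set (Fin d → ℝ)) = ⊤)
    (hconv : ConvInd (S : Set (Fin d → ℝ))) :
    ∃ ν : StrictNorm d, ∀ p ∈ S, ν.toFun p = 1 :=
  exists_strict_norm_through_general d S hsymm h0 hconv
end
end

section
/- Let ‖·‖ be a norm on ℝ^d whose unit ball is strictly convex, and let A₁, …, A_k be finite sets in ℝ^d such that, writing D for the diameter of ⋃_i A_i, one has ‖p − q‖ = D > 0 for all p ∈ A_i, q ∈ A_j with i ≠ j, and the diameter of each individual A_i is strictly less than D. Then {A₁, …, A_k} is a strictly antipodal family. -/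
/-!
Fix `p ∈ A i`, `q ∈ A j` with `i ≠ j`, so `ν (q - p) = D`. By Hahn–Banach there is a linear
functional `φ ≤ ν` with `φ (q - p) = D`; by strict convexity, `φ < D` on the rest of the ball of
radius `D`. For any other point `r` of the union, `q - r` and `r - p`
lie in that ball and differ from `q - p`, so `φ (q - r) < D` and `φ (r - p) < D`; as the two sum
to `φ (q - p) = D`, both are positive, i.e. `φ p < φ r < φ q`.
-/

open Pointwise Filter

noncomputable section

theorem Seminorm.exists_linearMap_le_apply_eq {E : Type*} [AddCommGroup E] [Module ℝ E]
    (N : Seminorm ℝ E) (u : E) : ∃ φ : E →ₗ[ℝ] ℝ, φ u = N u ∧ ∀ x, φ x ≤ N x := by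
  have hker : ∀ c : ℝ, c • u = 0 → c • N u = 0 := fun c hc => by
    have : |c| * N u = 0 := by rw [← Real.norm_eq_abs, ← map_smul_eq_mul, hc, map_zero]
    rw [smul_eq_mul, ← abs_eq_zero, abs_mul, abs_of_nonneg (apply_nonneg N u), this]
  let f : E →ₗ.[ℝ] ℝ := LinearPMap.mkSpanSingleton' u (N u) hker
  have hu : u ∈ f.domain := by
    rw [LinearPMap.domain_mkSpanSingleton]
    exact Submodule.mem_span_singleton_self u
  obtain ⟨φ, hφf, hφN⟩ := exists_extension_of_le_sublinear f N
    (fun c hc x => by rw [map_smul_eq_mul, Real.norm_of_nonneg hc.le])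
    (map_add_le_add N) (by
      rintro ⟨x, hx⟩
      rw [LinearPMap.domain_mkSpanSingleton] at hx
      obtain ⟨c, rfl⟩ := Submodule.mem_span_singleton.mp hx
      rw [LinearPMap.mkSpanSingleton'_apply, map_smul_eq_mul, smul_eq_mul, Real.norm_eq_abs]
      exact mul_le_mul_of_nonneg_right (le_abs_self c) (apply_nonneg N u))
  refine ⟨φ, ?_, hφN⟩
  rw [← LinearPMap.mkSpanSingleton'_apply_self u (N u) hker hu]
  exact hφf ⟨u, hu⟩

namespace StrictNorm

variable {d : ℕ} (ν : StrictNorm d)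

def toSeminorm : Seminorm ℝ (Fin d → ℝ) :=
  Seminorm.of ν.toFun ν.add_le ν.smul_eq

theorem toFun_half_add_lt {x y : Fin d → ℝ} (hxy : ν.toFun x = ν.toFun y) (hne : x ≠ y) :
    ν.toFun ((1 / 2 : ℝ) • (x + y)) < ν.toFun x := by
  set c := ν.toFun x
  have hc : 0 < c := by
    refine lt_of_le_of_ne (apply_nonneg ν.toSeminorm x) fun h => hne ?_
    rw [(ν.eq_zero_iff x).mp h.symm, (ν.eq_zero_iff y).mp (hxy ▸ h.symm)]
  have hunit : ∀ z, ν.toFun z = c → ν.toFun (c⁻¹ • z) = 1 := fun z hz => by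
    rw [ν.smul_eq, abs_of_pos (inv_pos.mpr hc), hz, inv_mul_cancel₀ hc.ne']
  have hmid := ν.strictly_convex _ _ (hunit x rfl) (hunit y hxy.symm)
    ((smul_right_injective _ (inv_ne_zero hc.ne')).ne hne)
  have hscale : (1 / 2 : ℝ) • (x + y) = c • ((1 / 2 : ℝ) • (c⁻¹ • x + c⁻¹ • y)) := by
    rw [← smul_add, smul_comm c, smul_smul c, mul_inv_cancel₀ hc.ne', one_smul]
  rw [hscale, ν.smul_eq, abs_of_pos hc]
  exact mul_lt_of_lt_one_right hc hmid

theorem apply_lt_of_supports {φ : (Fin d → ℝ) →ₗ[ℝ] ℝ} (hφ : ∀ x, φ x ≤ ν.toFun x)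
    {u x : Fin d → ℝ} (hu : φ u = ν.toFun u) (hx : ν.toFun x ≤ ν.toFun u) (hne : x ≠ u) :
    φ x < φ u := by
  rw [hu]
  rcases hx.lt_or_eq with hlt | heq
  · exact (hφ x).trans_lt hlt
  · have hmid := (hφ _).trans_lt (ν.toFun_half_add_lt heq hne)
    rw [map_smul, map_add, hu, smul_eq_mul] at hmid
    linarith

theorem apply_mem_Ioo_of_supports {φ : (Fin d → ℝ) →ₗ[ℝ] ℝ} (hφ : ∀ x, φ x ≤ ν.toFun x)
    {p q r : Fin d → ℝ} (hpq : φ (q - p) = ν.toFun (q - p))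
    (hqr : ν.toFun (q - r) ≤ ν.toFun (q - p)) (hrp : ν.toFun (r - p) ≤ ν.toFun (q - p))
    (hr_ne_p : r ≠ p) (hr_ne_q : r ≠ q) : φ r ∈ Set.Ioo (φ p) (φ q) := by
  have h₁ := ν.apply_lt_of_supports hφ hpq hqr (sub_right_injective.ne hr_ne_p)
  have h₂ := ν.apply_lt_of_supports hφ hpq hrp (sub_left_injective.ne hr_ne_q)
  simp only [map_sub] at h₁ h₂
  exact ⟨by linarith, by linarith⟩

end StrictNorm

theorem strictlyAntipodal_of_diameter_general (d k : ℕ) (ν : StrictNorm d)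
    (A : Fin k → Finset (Fin d → ℝ)) (D : ℝ)
    (hub : ∀ p ∈ ⋃ i, ((A i : Set (Fin d → ℝ))), ∀ q ∈ ⋃ i, ((A i : Set (Fin d → ℝ))),
      ν.toFun (p - q) ≤ D)
    (hcross : ∀ i j, i ≠ j → ∀ p ∈ A i, ∀ q ∈ A j, ν.toFun (p - q) = D) :
    StrictlyAntipodal (fun i => ((A i : Set (Fin d → ℝ)))) := by
  intro i j hij p hp q hq
  have hp' : p ∈ ⋃ t, (A t : Set (Fin d → ℝ)) := Set.mem_iUnion.mpr ⟨i, hp⟩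
  have hq' : q ∈ ⋃ t, (A t : Set (Fin d → ℝ)) := Set.mem_iUnion.mpr ⟨j, hq⟩
  have hdiam : ν.toFun (q - p) = D := hcross j i hij.symm q hq p hp
  obtain ⟨φ, hφ_eq, hφ⟩ := ν.toSeminorm.exists_linearMap_le_apply_eq (q - p)
  refine ⟨φ, fun r hr hr_ne_p hr_ne_q => ν.apply_mem_Ioo_of_supports hφ hφ_eq ?_ ?_ hr_ne_p hr_ne_q⟩
  · exact hdiam ▸ hub q hq' r hr
  · exact hdiam ▸ hub r hr p hp'

/-- If, in a strictly convex norm, the distance between points of different `A i`'s is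
always equal to the diameter `D > 0` of the union, while each `A i` has diameter `< D`,
then `{A₁, …, A_k}` is a strictly antipodal family. -/
theorem strictlyAntipodal_of_diameter (d k : ℕ) (ν : StrictNorm d)
    (A : Fin k → Finset (Fin d → ℝ)) (D : ℝ) (hD : 0 < D)
    (hub : ∀ p ∈ ⋃ i, ((A i : Set (Fin d → ℝ))), ∀ q ∈ ⋃ i, ((A i : Set (Fin d → ℝ))),
      ν.toFun (p - q) ≤ D)
    (hcross : ∀ i j, i ≠ j → ∀ p ∈ A i, ∀ q ∈ A j, ν.toFun (p - q) = D)
    (hsmall : ∀ i, ∀ p ∈ A i, ∀ q ∈ A i, ν.toFun (p - q) < D) :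
    StrictlyAntipodal (fun i => ((A i : Set (Fin d → ℝ)))) :=
  strictlyAntipodal_of_diameter_general d k ν A D hub hcross
end
end

section
/- For every d ≥ 3, liminf_{n→∞} W_d(n)/n² ≥ (1/2)(1 − 1/a(d)) and liminf_{n→∞} D_d(n)/n² ≥ (1/2)(1 − 1/a(d)). -/
open Pointwise Filter

noncomputable section

/-!
Let `A₁, …, A_k` be a strictly antipodal family of large sets and take `n` points, at least
`⌊n/k⌋` from each `Aᵢ`. For `p ∈ Aᵢ`, `q ∈ Aⱼ` with `i ≠ j`, the functional separating `p` from `q`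
makes `p - q` the unique maximiser of a linear functional `φ` on the difference set. Hence for small
`t` the ellipsoidal norm `√(t²‖x‖² + φ(x)²)`, rescaled so that `p - q` has norm `1`, is at most `1`
on all differences. The maximum of these norms over the `C(k,2)⌊n/k⌋²` pairs `(p, q)` with `i < j`
is strictly convex and makes all of them diameter pairs. No two of them are parallel: parallel
vectors of norm `1` agree up to sign, and `p - q` is represented by a single pair. Finally `k` can
be taken to be `a(d)`, or arbitrarily large when the sizes of such families are unbounded.
-/

open Topology Function

variable {d : ℕ}

namespace StrictNorm

lemma nonneg (N : StrictNorm d) (x : Fin d → ℝ) : 0 ≤ N.toFun x := by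
  have hneg : N.toFun (-x) = N.toFun x := by simpa using N.smul_eq (-1) x
  have h := N.add_le x (-x)
  rw [add_neg_cancel, (N.eq_zero_iff 0).2 rfl, hneg] at h
  linarith

lemma midpoint_lt_one (N : StrictNorm d) {x y : Fin d → ℝ} (hx : N.toFun x ≤ 1)
    (hy : N.toFun y ≤ 1) (hxy : x ≠ y) : N.toFun ((1 / 2 : ℝ) • (x + y)) < 1 := by
  by_cases h : N.toFun x = 1 ∧ N.toFun y = 1
  · exact N.strictly_convex x y h.1 h.2 hxy
  have hsum : N.toFun x + N.toFun y < 2 := by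
    rcases not_and_or.1 h with h | h
    · linarith [hx.lt_of_ne h]
    · linarith [hy.lt_of_ne h]
  rw [N.smul_eq, abs_of_pos one_half_pos]
  linarith [N.add_le x y]

def ofInjective {F : Type*} [NormedAddCommGroup F] [NormedSpace ℝ F] [StrictConvexSpace ℝ F]
    (L : (Fin d → ℝ) →ₗ[ℝ] F) (hL : Injective L) : StrictNorm d where
  toFun x := ‖L x‖
  eq_zero_iff x := by rw [norm_eq_zero, map_eq_zero_iff L hL]
  smul_eq a x := by rw [map_smul, norm_smul, Real.norm_eq_abs]
  add_le x y := by rw [map_add]; exact norm_add_le _ _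
  strictly_convex x y hx hy hxy := by
    rw [smul_add, map_add, map_smul, map_smul]
    exact norm_combo_lt_of_ne hx.le hy.le (hL.ne hxy) one_half_pos one_half_pos (by norm_num)

def finsetSup {ι : Type*} (s : Finset ι) (hs : s.Nonempty) (N : ι → StrictNorm d) :
    StrictNorm d where
  toFun x := s.sup' hs fun i => (N i).toFun x
  eq_zero_iff x := by
    constructor
    · intro h
      obtain ⟨i, hi⟩ := hs
      refine ((N i).eq_zero_iff x).1 (le_antisymm ?_ ((N i).nonneg x))
      exact h ▸ Finset.le_sup' (fun i => (N i).toFun x) hi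
    · rintro rfl
      simp only [fun i => ((N i).eq_zero_iff 0).2 rfl, Finset.sup'_const]
  smul_eq a x := by
    simp only [(N _).smul_eq]
    exact (Finset.mul₀_sup' (abs_nonneg a) _ s hs).symm
  add_le x y :=
    Finset.sup'_le hs _ fun i hi => ((N i).add_le x y).trans <|
      add_le_add (Finset.le_sup' (fun i => (N i).toFun x) hi)
        (Finset.le_sup' (fun i => (N i).toFun y) hi)
  strictly_convex x y hx hy hxy :=
    (Finset.sup'_lt_iff hs).2 fun i hi => (N i).midpoint_lt_one
      (hx ▸ Finset.le_sup' (fun i => (N i).toFun x) hi)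
      (hy ▸ Finset.le_sup' (fun i => (N i).toFun y) hi) hxy

lemma le_finsetSup {ι : Type*} {s : Finset ι} (hs : s.Nonempty) (N : ι → StrictNorm d) {i : ι}
    (hi : i ∈ s) (x : Fin d → ℝ) : (N i).toFun x ≤ (finsetSup s hs N).toFun x :=
  Finset.le_sup' (fun i => (N i).toFun x) hi

lemma finsetSup_le_iff {ι : Type*} {s : Finset ι} (hs : s.Nonempty) (N : ι → StrictNorm d)
    {x : Fin d → ℝ} {a : ℝ} : (finsetSup s hs N).toFun x ≤ a ↔ ∀ i ∈ s, (N i).toFun x ≤ a :=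
  Finset.sup'_le_iff hs _

end StrictNorm

def IsExposedDiff (U : Set (Fin d → ℝ)) (p q : Fin d → ℝ) : Prop :=
  ∃ φ : (Fin d → ℝ) →ₗ[ℝ] ℝ, ∀ x ∈ U, ∀ y ∈ U, (x, y) ≠ (p, q) → φ (x - y) < φ (p - q)

namespace IsExposedDiff

variable {U V : Set (Fin d → ℝ)} {p q x y : Fin d → ℝ}

lemma mono (h : IsExposedDiff U p q) (hVU : V ⊆ U) : IsExposedDiff V p q :=
  let ⟨φ, hφ⟩ := h
  ⟨φ, fun x hx y hy => hφ x (hVU hx) y (hVU hy)⟩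

lemma eq_of_sub_eq (h : IsExposedDiff U p q) (hx : x ∈ U) (hy : y ∈ U) (hxy : x - y = p - q) :
    (x, y) = (p, q) := by
  obtain ⟨φ, hφ⟩ := h
  by_contra hne
  exact (hφ x hx y hy hne).ne (congrArg φ hxy)

end IsExposedDiff

/-- `x ↦ (t • x, φ x)`, into `ℝ^d × ℝ` with the Euclidean norm. -/
def ellipsoidMap (t : ℝ) (φ : (Fin d → ℝ) →ₗ[ℝ] ℝ) :
    (Fin d → ℝ) →ₗ[ℝ] WithLp 2 (EuclideanSpace ℝ (Fin d) × ℝ) :=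
  (WithLp.linearEquiv 2 ℝ _).symm.toLinearMap ∘ₗ
    ((t • (WithLp.linearEquiv 2 ℝ (Fin d → ℝ)).symm.toLinearMap).prod φ)

lemma norm_ellipsoidMap_sq (t : ℝ) (φ : (Fin d → ℝ) →ₗ[ℝ] ℝ) (x : Fin d → ℝ) :
    ‖ellipsoidMap t φ x‖ ^ 2 = t ^ 2 * ‖WithLp.toLp 2 x‖ ^ 2 + φ x ^ 2 := by
  rw [WithLp.prod_norm_sq_eq_of_L2]
  simp [ellipsoidMap, norm_smul, mul_pow]

lemma ellipsoidMap_injective {t : ℝ} (ht : t ≠ 0) (φ : (Fin d → ℝ) →ₗ[ℝ] ℝ) :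
    Injective (ellipsoidMap t φ) := by
  rw [← LinearMap.ker_eq_bot, LinearMap.ker_eq_bot']
  intro x hx
  have h := norm_ellipsoidMap_sq t φ x
  rw [hx, norm_zero] at h
  have h0 : t ^ 2 * ‖WithLp.toLp 2 x‖ ^ 2 = 0 := by
    linarith [sq_nonneg (φ x), mul_nonneg (sq_nonneg t) (sq_nonneg ‖WithLp.toLp 2 x‖)]
  simpa [ht] using h0

lemma IsExposedDiff.exists_strictNorm {U : Finset (Fin d → ℝ)} {p q : Fin d → ℝ} (hpq : p ≠ q)
    (h : IsExposedDiff U p q) :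
    ∃ N : StrictNorm d, N.toFun (p - q) = 1 ∧ ∀ x ∈ U, ∀ y ∈ U, N.toFun (x - y) ≤ 1 := by
  obtain ⟨φ, hφ⟩ := h
  -- As `t → 0` the ellipsoidal norm tends to `|φ|`, maximised on `U - U` only at `±(p - q)`.
  have hpair : ∀ x ∈ U, ∀ y ∈ U, ∀ᶠ t in 𝓝 (0 : ℝ),
      ‖ellipsoidMap t φ (x - y)‖ ^ 2 ≤ ‖ellipsoidMap t φ (p - q)‖ ^ 2 := by
    intro x hx y hy
    by_cases hxy : (x, y) = (p, q)
    · obtain ⟨rfl, rfl⟩ := Prod.mk.inj hxy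
      exact Eventually.of_forall fun _ => le_rfl
    by_cases hyx : (y, x) = (p, q)
    · obtain ⟨rfl, rfl⟩ := Prod.mk.inj hyx
      refine Eventually.of_forall fun t => ?_
      rw [← neg_sub, map_neg, norm_neg]
    have hlt : φ (x - y) ^ 2 < φ (p - q) ^ 2 := by
      have h₁ := hφ x hx y hy hxy
      have h₂ := hφ y hy x hx hyx
      rw [← neg_sub x y, map_neg] at h₂
      exact sq_lt_sq' (by linarith) h₁
    simp only [norm_ellipsoidMap_sq]
    exact (ContinuousAt.eventually_lt (by fun_prop) (by fun_prop) (by simpa using hlt)).mono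
      fun t ht => ht.le
  have hall : ∀ᶠ t in 𝓝[≠] (0 : ℝ), ∀ x ∈ U, ∀ y ∈ U,
      ‖ellipsoidMap t φ (x - y)‖ ^ 2 ≤ ‖ellipsoidMap t φ (p - q)‖ ^ 2 := by
    refine nhdsWithin_le_nhds ((eventually_all_finset U).2 fun x hx => ?_)
    exact (eventually_all_finset U).2 (hpair x hx)
  obtain ⟨t, ht, ht0⟩ := (hall.and self_mem_nhdsWithin).exists
  set L := ellipsoidMap t φ
  have hL := ellipsoidMap_injective ht0 φ
  have hLpq : ‖L (p - q)‖ ≠ 0 := by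
    simpa using hL.ne (sub_ne_zero.2 hpq)
  refine ⟨StrictNorm.ofInjective (‖L (p - q)‖⁻¹ • L)
    ((smul_right_injective _ (inv_ne_zero hLpq)).comp hL), ?_, fun x hx y hy => ?_⟩
  · simp only [StrictNorm.ofInjective, LinearMap.smul_apply, norm_smul, norm_inv, norm_norm]
    exact inv_mul_cancel₀ hLpq
  · have hle : ‖L (x - y)‖ ≤ ‖L (p - q)‖ :=
      (pow_le_pow_iff_left₀ (norm_nonneg _) (norm_nonneg _) two_ne_zero).1 (ht x hx y hy)
    simp only [StrictNorm.ofInjective, LinearMap.smul_apply, norm_smul, norm_inv, norm_norm]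
    exact inv_mul_le_one_of_le₀ hle (norm_nonneg _)

lemma exists_strictNorm_of_forall_isExposedDiff {U : Finset (Fin d → ℝ)}
    {T : Finset ((Fin d → ℝ) × (Fin d → ℝ))} (hTne : T.Nonempty)
    (hT : ∀ e ∈ T, e.1 ∈ U ∧ e.2 ∈ U ∧ e.1 ≠ e.2 ∧ IsExposedDiff U e.1 e.2) :
    ∃ ν : StrictNorm d, (∀ e ∈ T, ν.toFun (e.1 - e.2) = 1) ∧
      ∀ x ∈ U, ∀ y ∈ U, ν.toFun (x - y) ≤ 1 := by
  choose N hN₁ hN using fun e (he : e ∈ T) => (hT e he).2.2.2.exists_strictNorm (hT e he).2.2.1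
  set ν := StrictNorm.finsetSup T.attach hTne.attach fun e => N e.1 e.2
  have hν : ∀ x ∈ U, ∀ y ∈ U, ν.toFun (x - y) ≤ 1 := fun x hx y hy =>
    (StrictNorm.finsetSup_le_iff _ _).2 fun f _ => hN f.1 f.2 x hx y hy
  refine ⟨ν, fun e he => le_antisymm (hν _ (hT e he).1 _ (hT e he).2.1) ?_, hν⟩
  exact hN₁ e he ▸ StrictNorm.le_finsetSup hTne.attach (fun f => N f.1 f.2)
    (T.mem_attach ⟨e, he⟩) (e.1 - e.2)

lemma card_le_sq_of_forall_mem {α : Type*} {S : Finset α} {T : Finset (α × α)}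
    (h : ∀ e ∈ T, e.1 ∈ S ∧ e.2 ∈ S) : T.card ≤ S.card ^ 2 := by
  rw [sq, ← Finset.card_product]
  exact Finset.card_le_card fun e he => Finset.mem_product.2 (h e he)

lemma Wfun_le (d n : ℕ) : Wfun d n ≤ n ^ 2 :=
  csSup_le' fun _ ⟨_, _, _, hS, hT, _, hk⟩ =>
    hk ▸ hS ▸ card_le_sq_of_forall_mem fun e he => ⟨(hT e he).1, (hT e he).2.1⟩

lemma Dfun_le (d n : ℕ) : Dfun d n ≤ n ^ 2 :=
  csSup_le' fun _ ⟨_, _, _, _, hS, _, _, hT, hk⟩ =>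
    hk ▸ hS ▸ card_le_sq_of_forall_mem fun e he => ⟨(hT e he).1, (hT e he).2.1⟩

lemma card_le_Wfun {S : Finset (Fin d → ℝ)} (ν : StrictNorm d)
    {T : Finset ((Fin d → ℝ) × (Fin d → ℝ))}
    (hT : ∀ e ∈ T, e.1 ∈ S ∧ e.2 ∈ S ∧ ν.toFun (e.1 - e.2) = 1)
    (hpar : ∀ e ∈ T, ∀ f ∈ T, e ≠ f → ∀ c : ℝ, e.1 - e.2 ≠ c • (f.1 - f.2)) :
    T.card ≤ Wfun d S.card :=
  le_csSup ⟨S.card ^ 2, fun _ ⟨_, _, _, hS, hT, _, hk⟩ =>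
      hk ▸ hS ▸ card_le_sq_of_forall_mem fun e he => ⟨(hT e he).1, (hT e he).2.1⟩⟩
    ⟨S, ν, T, rfl, hT, hpar, rfl⟩

lemma card_le_Dfun {S : Finset (Fin d → ℝ)} (ν : StrictNorm d) {D : ℝ}
    {T : Finset ((Fin d → ℝ) × (Fin d → ℝ))} (hS : ∀ p ∈ S, ∀ q ∈ S, ν.toFun (p - q) ≤ D)
    (hD : ∃ p ∈ S, ∃ q ∈ S, ν.toFun (p - q) = D)
    (hT : ∀ e ∈ T, e.1 ∈ S ∧ e.2 ∈ S ∧ e.1 ≠ e.2 ∧ ν.toFun (e.1 - e.2) = D ∧ (e.2, e.1) ∉ T) :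
    T.card ≤ Dfun d S.card :=
  le_csSup ⟨S.card ^ 2, fun _ ⟨_, _, _, _, hS, _, _, hT, hk⟩ =>
      hk ▸ hS ▸ card_le_sq_of_forall_mem fun e he => ⟨(hT e he).1, (hT e he).2.1⟩⟩
    ⟨S, ν, T, D, rfl, hS, hD, hT, rfl⟩

lemma card_le_Wfun_and_Dfun_of_forall_isExposedDiff {U : Finset (Fin d → ℝ)}
    {T : Finset ((Fin d → ℝ) × (Fin d → ℝ))}
    (hT : ∀ e ∈ T, e.1 ∈ U ∧ e.2 ∈ U ∧ e.1 ≠ e.2 ∧ IsExposedDiff U e.1 e.2)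
    (hswap : ∀ e ∈ T, e.swap ∉ T) :
    T.card ≤ Wfun d U.card ∧ T.card ≤ Dfun d U.card := by
  rcases T.eq_empty_or_nonempty with rfl | hTne
  · simp
  obtain ⟨ν, hν₁, hν⟩ := exists_strictNorm_of_forall_isExposedDiff hTne hT
  obtain ⟨e₀, he₀⟩ := hTne
  refine ⟨card_le_Wfun ν (fun e he => ⟨(hT e he).1, (hT e he).2.1, hν₁ e he⟩) ?_,
    card_le_Dfun ν hν ⟨e₀.1, (hT e₀ he₀).1, e₀.2, (hT e₀ he₀).2.1, hν₁ e₀ he₀⟩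
      fun e he => ⟨(hT e he).1, (hT e he).2.1, (hT e he).2.2.1, hν₁ e he, hswap e he⟩⟩
  -- Parallel unit vectors are equal up to sign, and `f.1 - f.2` has a unique representation.
  intro e he f hf hef c hc
  have hc₁ : |c| = 1 := by
    simpa [ν.smul_eq, hν₁ e he, hν₁ f hf] using (congrArg ν.toFun hc).symm
  have hfexp := (hT f hf).2.2.2
  rcases (abs_eq zero_le_one).1 hc₁ with rfl | rfl
  · exact hef (hfexp.eq_of_sub_eq (hT e he).1 (hT e he).2.1 (by simpa using hc))
  · have hef' : e.swap = f :=
      hfexp.eq_of_sub_eq (hT e he).2.1 (hT e he).1 (by rw [← neg_sub, hc]; simp)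
    exact hswap e he (hef' ▸ hf)

section Antipodal

variable {ι : Type*} {A : ι → Set (Fin d → ℝ)} {i j : ι}

lemma StrictlyAntipodal.disjoint (hA : StrictlyAntipodal A) (hi : (A i).Nontrivial)
    (hij : i ≠ j) : Disjoint (A i) (A j) := by
  refine Set.disjoint_left.2 fun p hpi hpj => ?_
  obtain ⟨φ, hφ⟩ := hA i j hij p hpi p hpj
  obtain ⟨r, hr, hrp⟩ := hi.exists_ne p
  have h := hφ r (Set.mem_iUnion.2 ⟨i, hr⟩) hrp hrp
  exact lt_asymm h.1 h.2

lemma StrictlyAntipodal.isExposedDiff (hA : StrictlyAntipodal A) (hi : (A i).Nontrivial)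
    (hij : i ≠ j) {p q : Fin d → ℝ} (hp : p ∈ A i) (hq : q ∈ A j) :
    IsExposedDiff (⋃ t, A t) p q := by
  obtain ⟨φ, hφ⟩ := hA i j hij p hp q hq
  obtain ⟨r, hr, hrp⟩ := hi.exists_ne p
  have hrq : r ≠ q := fun h => Set.disjoint_left.1 (hA.disjoint hi hij) hr (h ▸ hq)
  have hpq : φ p < φ q := (hφ r (Set.mem_iUnion.2 ⟨i, hr⟩) hrp hrq).elim lt_trans
  have hlow : ∀ x ∈ ⋃ t, A t, x ≠ p → φ p < φ x := fun x hx hxp =>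
    if hxq : x = q then hxq ▸ hpq else (hφ x hx hxp hxq).1
  have hup : ∀ x ∈ ⋃ t, A t, x ≠ q → φ x < φ q := fun x hx hxq =>
    if hxp : x = p then hxp ▸ hpq else (hφ x hx hxp hxq).2
  refine ⟨-φ, fun x hx y hy hxy => ?_⟩
  have hyq : φ y ≤ φ q := by
    rcases eq_or_ne y q with rfl | hyq
    exacts [le_rfl, (hup y hy hyq).le]
  simp only [LinearMap.neg_apply, map_sub]
  rcases eq_or_ne x p with rfl | hxp
  · linarith [hup y hy fun hyq => hxy (hyq ▸ rfl)]
  · linarith [hlow x hx hxp]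

end Antipodal

section CrossPairs

variable {α ι : Type*} [DecidableEq α] [Fintype ι] [LinearOrder ι] {B : ι → Finset α}

def crossPairs (B : ι → Finset α) : Finset (α × α) :=
  ({x : ι × ι | x.1 < x.2} : Finset (ι × ι)).biUnion fun ij => B ij.1 ×ˢ B ij.2

lemma mem_crossPairs {e : α × α} :
    e ∈ crossPairs B ↔ ∃ i j, i < j ∧ e.1 ∈ B i ∧ e.2 ∈ B j := by
  simp [crossPairs]

lemma card_crossPairs (hB : Pairwise (Disjoint on B)) {m : ℕ} (hm : ∀ i, (B i).card = m) :
    (crossPairs B).card = (Fintype.card ι).choose 2 * m ^ 2 := by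
  rw [crossPairs, Finset.card_biUnion]
  · simp only [Finset.card_product, hm, Finset.sum_const, Fintype.card_product_filter_lt,
      smul_eq_mul, sq]
  · intro x _ y _ hxy
    rw [onFun, Finset.disjoint_product]
    by_contra! h
    exact hxy (Prod.ext (not_imp_comm.1 (@hB _ _) h.1) (not_imp_comm.1 (@hB _ _) h.2))

lemma swap_notMem_crossPairs (hB : Pairwise (Disjoint on B)) {e : α × α}
    (he : e ∈ crossPairs B) : e.swap ∉ crossPairs B := by
  have hidx : ∀ {a i j}, a ∈ B i → a ∈ B j → i = j := fun hi hj =>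
    by_contra fun hij => Finset.disjoint_left.1 (hB hij) hi hj
  rw [mem_crossPairs] at he ⊢
  rintro ⟨i', j', hlt', h₁', h₂'⟩
  obtain ⟨i, j, hlt, h₁, h₂⟩ := he
  rw [hidx h₁ h₂', hidx h₂ h₁'] at hlt
  exact lt_asymm hlt hlt'

end CrossPairs

lemma choose_two_mul_sq_le_Wfun_and_Dfun {k n : ℕ} (hk : 0 < k) (hn : 2 ≤ n)
    {A : Fin k → Finset (Fin d → ℝ)} (hAn : ∀ i, n ≤ (A i).card)
    (hA : StrictlyAntipodal fun i => (A i : Set (Fin d → ℝ))) :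
    k.choose 2 * (n / k) ^ 2 ≤ Wfun d n ∧ k.choose 2 * (n / k) ^ 2 ≤ Dfun d n := by
  have hnt : ∀ i, (A i : Set (Fin d → ℝ)).Nontrivial := fun i =>
    Finset.one_lt_card_iff_nontrivial.1 (by linarith [hAn i])
  have hAdisj : Pairwise (Disjoint on A) := fun i j hij =>
    Finset.disjoint_coe.1 (hA.disjoint (hnt i) hij)
  choose B hBA hBcard using fun i =>
    Finset.exists_subset_card_eq ((Nat.div_le_self n k).trans (hAn i))
  have hBdisj : Pairwise (Disjoint on B) := fun i j hij =>
    (hAdisj hij).mono (hBA i) (hBA j)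
  obtain ⟨U, hBU, hUA, hUcard⟩ := Finset.exists_subsuperset_card_eq
    (Finset.biUnion_mono fun i _ => hBA i)
    (Finset.card_biUnion_le.trans (by simp [hBcard, Nat.mul_div_le]))
    ((hAn ⟨0, hk⟩).trans (Finset.card_le_card (Finset.subset_biUnion_of_mem A (Finset.mem_univ _))))
  have hUA' : (U : Set (Fin d → ℝ)) ⊆ ⋃ t, (A t : Set (Fin d → ℝ)) := by
    simpa using Finset.coe_subset.2 hUA
  have hcross := card_le_Wfun_and_Dfun_of_forall_isExposedDiff (U := U) (T := crossPairs B)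
    (fun e he => ?_) fun e he => swap_notMem_crossPairs hBdisj he
  · rwa [card_crossPairs hBdisj hBcard, Fintype.card_fin, hUcard] at hcross
  obtain ⟨i, j, hij, h₁, h₂⟩ := mem_crossPairs.1 he
  exact ⟨hBU (Finset.mem_biUnion.2 ⟨i, Finset.mem_univ _, h₁⟩),
    hBU (Finset.mem_biUnion.2 ⟨j, Finset.mem_univ _, h₂⟩),
    fun h => Finset.disjoint_left.1 (hBdisj hij.ne) h₁ (h ▸ h₂),
    (hA.isExposedDiff (hnt i) hij.ne (hBA i h₁) (hBA j h₂)).mono hUA'⟩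

lemma le_liminf_of_tendsto_of_eventually_le {u g : ℕ → ℝ} {c : ℝ}
    (hg : Tendsto g atTop (𝓝 c)) (hgu : ∀ᶠ n in atTop, g n ≤ u n)
    (hu : IsBoundedUnder (· ≤ ·) atTop u) : c ≤ liminf u atTop := by
  rw [← hg.liminf_eq]
  exact liminf_le_liminf hgu hg.isBoundedUnder_ge hu.isCoboundedUnder_ge

lemma half_one_sub_inv_le_liminf {k : ℕ} (hk : 0 < k) {W : ℕ → ℕ} (hW : ∀ n, W n ≤ n ^ 2)
    (hlow : ∀ᶠ n in atTop, k.choose 2 * (n / k) ^ 2 ≤ W n) :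
    1 / 2 * (1 - 1 / (k : ℝ)) ≤ liminf (fun n : ℕ => (W n : ℝ) / (n : ℝ) ^ 2) atTop := by
  have hk' : (0 : ℝ) < k := Nat.cast_pos.2 hk
  refine le_liminf_of_tendsto_of_eventually_le
    (g := fun n : ℕ => 1 / 2 * (1 - 1 / (k : ℝ)) * (1 - k / n) ^ 2) ?_ ?_ ?_
  · simpa using (((tendsto_const_div_atTop_nhds_zero_nat (k : ℝ)).const_sub 1).pow 2).const_mul
      (1 / 2 * (1 - 1 / (k : ℝ)))
  · filter_upwards [hlow, eventually_ge_atTop k] with n hn hkn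
    have hkn' : (k : ℝ) ≤ n := by exact_mod_cast hkn
    have hn0 : (0 : ℝ) < n := hk'.trans_le hkn'
    have hfloor : (n : ℝ) / k - 1 ≤ (n / k : ℕ) := by
      simpa only [Nat.floor_div_eq_div] using (Nat.sub_one_lt_floor ((n : ℝ) / k)).le
    have hfloor₀ : 0 ≤ (n : ℝ) / k - 1 := by rw [sub_nonneg, one_le_div hk']; exact hkn'
    rw [le_div_iff₀ (pow_pos hn0 2)]
    calc 1 / 2 * (1 - 1 / (k : ℝ)) * (1 - k / n) ^ 2 * n ^ 2
        = (k.choose 2 : ℝ) * ((n : ℝ) / k - 1) ^ 2 := by rw [Nat.cast_choose_two]; field_simp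
      _ ≤ (k.choose 2 : ℝ) * ((n / k : ℕ) : ℝ) ^ 2 := by gcongr
      _ ≤ W n := by exact_mod_cast hn
  · exact isBoundedUnder_of ⟨1, fun n => div_le_one_of_le₀ (by exact_mod_cast hW n) (by positivity)⟩

def HasLargeAntipodalFamilies (d k : ℕ) : Prop :=
  ∀ m : ℕ, ∃ A : Fin k → Finset (Fin d → ℝ),
    (∀ i, m ≤ (A i).card) ∧ StrictlyAntipodal (fun i => ((A i : Set (Fin d → ℝ))))

lemma hasLargeAntipodalFamilies_one (hd : 0 < d) : HasLargeAntipodalFamilies d 1 := by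
  intro m
  have : Nonempty (Fin d) := ⟨⟨0, hd⟩⟩
  obtain ⟨s, hs⟩ := Infinite.exists_subset_card_eq (Fin d → ℝ) m
  exact ⟨fun _ => s, fun _ => hs.ge, fun i j hij => absurd (Subsingleton.elim i j) hij⟩

lemma half_one_sub_inv_aconst_le (hd : 0 < d) {L : ℝ}
    (h : ∀ k, 0 < k → HasLargeAntipodalFamilies d k → 1 / 2 * (1 - 1 / (k : ℝ)) ≤ L) :
    1 / 2 * (1 - 1 / (aconst d : ℝ)) ≤ L := by
  change 1 / 2 * (1 - 1 / ((sSup {k | HasLargeAntipodalFamilies d k} : ℕ) : ℝ)) ≤ L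
  by_cases hb : BddAbove {k | HasLargeAntipodalFamilies d k}
  · have hone := hasLargeAntipodalFamilies_one hd
    exact h _ (le_csSup hb hone) (Nat.sSup_mem ⟨1, hone⟩ hb)
  -- Here `sSup` takes its junk value `0`, so the bound to prove is `1 / 2`.
  rw [Nat.sSup_of_not_bddAbove hb, Nat.cast_zero, div_zero, sub_zero, mul_one]
  refine le_of_forall_pos_le_add fun ε hε => ?_
  obtain ⟨N, hN⟩ := exists_nat_one_div_lt hε
  obtain ⟨k, hk, hNk⟩ := not_bddAbove_iff.1 hb N
  have hNk' : (N : ℝ) + 1 ≤ k := by exact_mod_cast hNk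
  have hkN : 1 / (k : ℝ) ≤ 1 / (N + 1) := by gcongr
  linarith [h k (by omega) hk]

/-- For every `d ≥ 3`, `liminf W_d(n)/n² ≥ ½(1 − 1/a(d))` and
`liminf D_d(n)/n² ≥ ½(1 − 1/a(d))`. -/
theorem liminf_W_D_lower (d : ℕ) (hd : 3 ≤ d) :
    (1 / 2 : ℝ) * (1 - 1 / (aconst d : ℝ)) ≤
        atTop.liminf (fun n : ℕ => (Wfun d n : ℝ) / (n : ℝ) ^ 2) ∧
    (1 / 2 : ℝ) * (1 - 1 / (aconst d : ℝ)) ≤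
        atTop.liminf (fun n : ℕ => (Dfun d n : ℝ) / (n : ℝ) ^ 2) := by
  have hfam : ∀ k n, 0 < k → 2 ≤ n → HasLargeAntipodalFamilies d k →
      k.choose 2 * (n / k) ^ 2 ≤ Wfun d n ∧ k.choose 2 * (n / k) ^ 2 ≤ Dfun d n :=
    fun k n hk hn hK =>
      let ⟨_, hAn, hA⟩ := hK n
      choose_two_mul_sq_le_Wfun_and_Dfun hk hn hAn hA
  have key : ∀ W : ℕ → ℕ, (∀ n, W n ≤ n ^ 2) →
      (∀ k n, 0 < k → 2 ≤ n → HasLargeAntipodalFamilies d k → k.choose 2 * (n / k) ^ 2 ≤ W n) →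
      (1 / 2 : ℝ) * (1 - 1 / (aconst d : ℝ)) ≤
        atTop.liminf (fun n : ℕ => (W n : ℝ) / (n : ℝ) ^ 2) :=
    fun W hW hlow => half_one_sub_inv_aconst_le (by omega) fun k hk hK =>
      half_one_sub_inv_le_liminf hk hW ((eventually_ge_atTop 2).mono fun n hn => hlow k n hk hn hK)
  exact ⟨key _ (Wfun_le d) fun k n hk hn hK => (hfam k n hk hn hK).1,
    key _ (Dfun_le d) fun k n hk hn hK => (hfam k n hk hn hK).2⟩
end
end
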